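/- Let n ≥ 3, k ≥ 1, d = k+1 and 2 ≤ s ≤ n−1 be integers, and assume C(k+1+n,n) ≤ s·(C(k+n,n)+n) and s·(n−s+1) < C(n−s+k+1, k+1). Then for all linearly independent linear forms L_1,…,L_s ∈ R_1 and all F_1,…,F_s ∈ R_k, dim_K(W(L_1,F_1;k+1)+…+W(L_s,F_s;k+1)) ≤ C(k+1+n,n) − C(n−s+k+1, k+1) + s·(n−s+1); in particular the sum is a proper subspace of R_{k+1}, with codimension at least C(n−s+k+1,k+1) − s(n−s+1). -/

import Mathlib

open MvPolynomial

/-- `G·V`, the image of the subspace `V` under multiplication by `G`. -/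
noncomputable def mulSub {K : Type*} [Field K] {σ : Type*} (G : MvPolynomial σ K)
    (V : Submodule K (MvPolynomial σ K)) : Submodule K (MvPolynomial σ K) :=
  V.map (LinearMap.mulLeft K G)

/-- `W(L,F;d) = L^{d-k}·R_k + L^{d-k-1}·F·R_1`, the affine cone over the tangent space
to the k-th osculating variety of the d-uple Veronese at the point `L^{d-k}F`. -/
noncomputable def Wspace {K : Type*} [Field K] {σ : Type*} (k d : ℕ)
    (L F : MvPolynomial σ K) : Submodule K (MvPolynomial σ K) :=
  mulSub (L ^ (d - k)) (homogeneousSubmodule σ K k) ⊔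
    mulSub (L ^ (d - k - 1) * F) (homogeneousSubmodule σ K 1)

/-- the apolarity pairing `φ(f,g) = Σ_I f_I g_I`. -/
noncomputable def apol {K : Type*} [Field K] {σ : Type*} (f g : MvPolynomial σ K) : K :=
  ∑ I ∈ f.support, f.coeff I * g.coeff I

/-- the perpendicular of a set of forms, inside `R_d`, w.r.t. the apolarity pairing -/
def perpSet {K : Type*} [Field K] {σ : Type*} (d : ℕ) (V : Set (MvPolynomial σ K)) :
    Set (MvPolynomial σ K) :=
  {f | f ∈ homogeneousSubmodule σ K d ∧ ∀ v ∈ V, apol f v = 0}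

/-! The tangent spaces lie in `T + U`, where `T = Σ L_i·R_k` is the degree `k+1` part of the ideal
of the `L_i` and `U` is spanned by the `s(n+1-s)` products `F_i·v_t`, the `v_t` completing the `L_i`
to a basis of `R_1`; the remaining products `F_i·L_j = L_j·F_i` already lie in `T`. A linear change
of coordinates `ψ` sending the `L_i` to `0` and the `v_t` to the variables of a polynomial ring in
`n+1-s` variables vanishes on `T` and maps `R_{k+1}` onto the forms of degree `k+1` of that ring,
so `T` has codimension at least `C(n-s+k+1, k+1)` in `R_{k+1}`. -/

open Module Submodule

namespace MvPolynomial

section Semiring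

variable {R : Type*} [CommSemiring R] {σ : Type*}

instance [Finite σ] (e : ℕ) : Module.Finite R (homogeneousSubmodule σ R e) :=
  Module.Finite.iff_fg.mpr (homogeneousSubmodule_fg σ R e)

theorem finrank_homogeneousSubmodule [StrongRankCondition R] [Fintype σ] (e : ℕ) :
    finrank R (homogeneousSubmodule σ R e) = (Fintype.card σ + e - 1).choose e := by
  classical
  have b : Basis {d : σ →₀ ℕ | d.degree = e} R (homogeneousSubmodule σ R e) := by
    rw [homogeneousSubmodule_eq_finsupp_supported]
    exact basisRestrictSupport R _
  rw [finrank_eq_nat_card_basis b, ← Nat.card_eq_fintype_card, ← Sym.natCard_sym_eq_choose]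
  exact Nat.card_congr ((Sym.equivNatSum σ e).trans (Equiv.subtypeEquivRight fun _ => Iff.rfl)).symm

theorem aeval_comp_subtype_homogeneousSubmodule_one {A : Type*} [CommSemiring A] [Algebra R A]
    (q : homogeneousSubmodule σ R 1 →ₗ[R] A) :
    (aeval fun j => q ⟨X j, isHomogeneous_X R j⟩).toLinearMap ∘ₗ
      (homogeneousSubmodule σ R 1).subtype = q :=
  LinearMap.ext_on_range ((span_range_subtype_eq_top_iff _ (isHomogeneous_X R)).mpr
    homogeneousSubmodule_one_eq_span_X.symm) fun j => by simp

theorem homogeneousSubmodule_le_map {τ : Type*} {ψ : MvPolynomial σ R →ₐ[R] MvPolynomial τ R}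
    (h : homogeneousSubmodule τ R 1 ≤ (homogeneousSubmodule σ R 1).map ψ.toLinearMap) (e : ℕ) :
    homogeneousSubmodule τ R e ≤ (homogeneousSubmodule σ R e).map ψ.toLinearMap := by
  rw [← homogeneousSubmodule_one_pow, ← homogeneousSubmodule_one_pow R e, Submodule.map_pow]
  exact pow_le_pow_left' h e

end Semiring

variable {K : Type*} [Field K] {σ : Type*} [Fintype σ]

theorem exists_coordinates_killing {ι : Type*} [Fintype ι] {L : ι → MvPolynomial σ K}
    (hL : ∀ i, L i ∈ homogeneousSubmodule σ K 1) (hLi : LinearIndependent K L) :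
    ∃ (v : Fin (Fintype.card σ - Fintype.card ι) → MvPolynomial σ K)
      (ψ : MvPolynomial σ K →ₐ[K] MvPolynomial (Fin (Fintype.card σ - Fintype.card ι)) K),
      (∀ t, v t ∈ homogeneousSubmodule σ K 1) ∧
      homogeneousSubmodule σ K 1 ≤ span K (Set.range L) ⊔ span K (Set.range v) ∧
      (∀ i, ψ (L i) = 0) ∧ ∀ t, ψ (v t) = X t := by
  set V := homogeneousSubmodule σ K 1
  let L' : ι → V := fun i => ⟨L i, hL i⟩
  have hL' : LinearIndependent K L' := .of_comp V.subtype hLi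
  obtain ⟨C, hWC⟩ := Submodule.exists_isCompl (span K (Set.range L'))
  have hC : finrank K C = Fintype.card σ - Fintype.card ι := by
    have := finrank_add_eq_of_isCompl hWC
    rw [finrank_span_eq_card hL',
      finrank_homogeneousSubmodule, Nat.add_sub_cancel, Nat.choose_one_right] at this
    omega
  have := Module.Free.of_divisionRing K C
  let b := finBasisOfFinrankEq K C hC
  let q : V →ₗ[K] MvPolynomial (Fin _) K :=
    Finsupp.linearCombination K X ∘ₗ b.repr.toLinearMap ∘ₗ projectionOnto C _ hWC.symm
  have hψ := aeval_comp_subtype_homogeneousSubmodule_one q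
  refine ⟨fun t => b t, aeval fun j => q ⟨X j, isHomogeneous_X K j⟩, fun t => (b t : V).2, ?_,
    fun i => ?_, fun t => ?_⟩
  · have hCspan : span K (Set.range fun t => (b t : V)) = C :=
      (span_range_subtype_eq_top_iff C fun t => (b t).2).mp b.span_eq
    have hCv : C.map V.subtype = span K (Set.range fun t => ((b t : V) : MvPolynomial σ K)) := by
      conv_lhs => rw [← hCspan]
      rw [map_span, ← Set.range_comp]; rfl
    refine le_of_eq ?_
    calc V = (span K (Set.range L') ⊔ C).map V.subtype := by rw [hWC.sup_eq_top, map_subtype_top]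
      _ = _ := by rw [Submodule.map_sup, hCv, map_span, ← Set.range_comp]; rfl
  · refine (LinearMap.congr_fun hψ (L' i)).trans ?_
    simp [q, (projectionOnto_apply_eq_zero_iff hWC.symm).mpr (subset_span ⟨i, rfl⟩)]
  · refine (LinearMap.congr_fun hψ (b t)).trans ?_
    simp [q]

end MvPolynomial

section Tangent

variable {K : Type*} [Field K] {σ : Type*}

theorem mulSub_homogeneousSubmodule_le {G : MvPolynomial σ K} {a : ℕ}
    (hG : G ∈ homogeneousSubmodule σ K a) (b : ℕ) :
    mulSub G (homogeneousSubmodule σ K b) ≤ homogeneousSubmodule σ K (a + b) := by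
  rintro _ ⟨p, hp, rfl⟩
  exact hG.mul hp

theorem iSup_mulSub_le_homogeneousSubmodule {ι : Type*} {L : ι → MvPolynomial σ K}
    (hL : ∀ i, L i ∈ homogeneousSubmodule σ K 1) (e : ℕ) :
    ⨆ i, mulSub (L i) (homogeneousSubmodule σ K e) ≤ homogeneousSubmodule σ K (e + 1) :=
  iSup_le fun i => add_comm 1 e ▸ mulSub_homogeneousSubmodule_le (hL i) e

theorem finrank_iSup_mulSub_add_finrank_le [Fintype σ] {ι τ : Type*} [Fintype τ]
    {L : ι → MvPolynomial σ K} {v : τ → MvPolynomial σ K}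
    {ψ : MvPolynomial σ K →ₐ[K] MvPolynomial τ K}
    (hL : ∀ i, L i ∈ homogeneousSubmodule σ K 1) (hv : ∀ t, v t ∈ homogeneousSubmodule σ K 1)
    (hψL : ∀ i, ψ (L i) = 0) (hψv : ∀ t, ψ (v t) = X t) (e : ℕ) :
    finrank K ↥(⨆ i, mulSub (L i) (homogeneousSubmodule σ K e)) +
        finrank K (homogeneousSubmodule τ K (e + 1)) ≤
      finrank K (homogeneousSubmodule σ K (e + 1)) := by
  set P := homogeneousSubmodule σ K (e + 1)
  set T := ⨆ i, mulSub (L i) (homogeneousSubmodule σ K e)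
  have hTP : T ≤ P := iSup_mulSub_le_homogeneousSubmodule hL e
  let φ : P →ₗ[K] MvPolynomial τ K := ψ.toLinearMap ∘ₗ P.subtype
  have hTker : T ≤ LinearMap.ker ψ.toLinearMap := iSup_le fun i => by
    rintro _ ⟨p, -, rfl⟩
    simp [hψL i]
  have hker : T.comap P.subtype ≤ LinearMap.ker φ := fun x hx => hTker hx
  have hrange : homogeneousSubmodule τ K (e + 1) ≤ LinearMap.range φ := by
    have h1 : homogeneousSubmodule τ K 1 ≤ (homogeneousSubmodule σ K 1).map ψ.toLinearMap := by
      rw [homogeneousSubmodule_one_eq_span_X, span_le]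
      rintro _ ⟨t, rfl⟩
      exact ⟨v t, hv t, hψv t⟩
    rw [LinearMap.range_comp, range_subtype]
    exact homogeneousSubmodule_le_map h1 (e + 1)
  have hφ := LinearMap.finrank_range_add_finrank_ker φ
  have hτ := finrank_mono hrange
  have hT := (comapSubtypeEquivOfLe hTP).finrank_eq ▸ finrank_mono hker
  omega

theorem Wspace_succ (k : ℕ) (L F : MvPolynomial σ K) :
    Wspace k (k + 1) L F =
      mulSub L (homogeneousSubmodule σ K k) ⊔ mulSub F (homogeneousSubmodule σ K 1) := by
  simp [Wspace]

theorem Wspace_succ_le_homogeneousSubmodule {k : ℕ} {L F : MvPolynomial σ K}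
    (hL : L ∈ homogeneousSubmodule σ K 1) (hF : F ∈ homogeneousSubmodule σ K k) :
    Wspace k (k + 1) L F ≤ homogeneousSubmodule σ K (k + 1) := by
  rw [Wspace_succ]
  exact sup_le (add_comm 1 k ▸ mulSub_homogeneousSubmodule_le hL k)
    (mulSub_homogeneousSubmodule_le hF 1)

theorem iSup_Wspace_succ_le {k : ℕ} {ι τ : Type*} {L F : ι → MvPolynomial σ K}
    {v : τ → MvPolynomial σ K} (hF : ∀ i, F i ∈ homogeneousSubmodule σ K k)
    (hspan : homogeneousSubmodule σ K 1 ≤ span K (Set.range L) ⊔ span K (Set.range v)) :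
    ⨆ i, Wspace k (k + 1) (L i) (F i) ≤
      (⨆ i, mulSub (L i) (homogeneousSubmodule σ K k)) ⊔
        span K (Set.range fun p : ι × τ => F p.1 * v p.2) := by
  refine iSup_le fun i => ?_
  rw [Wspace_succ]
  refine sup_le (le_sup_of_le_left (le_iSup (fun i => mulSub (L i) _) i)) ?_
  refine (map_mono hspan).trans ?_
  rw [Submodule.map_sup, map_span, map_span, sup_le_iff, span_le, span_le]
  constructor
  · rintro _ ⟨_, ⟨j, rfl⟩, rfl⟩
    refine le_sup_of_le_left (le_iSup (fun i => mulSub (L i) _) j) ⟨F i, hF i, mul_comm _ _⟩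
  · rintro _ ⟨_, ⟨t, rfl⟩, rfl⟩
    exact mem_sup_right (subset_span ⟨(i, t), rfl⟩)

theorem finrank_iSup_Wspace_succ_add_finrank_le [Fintype σ] {k : ℕ} {ι : Type*} [Fintype ι]
    {L F : ι → MvPolynomial σ K} (hL : ∀ i, L i ∈ homogeneousSubmodule σ K 1)
    (hLi : LinearIndependent K L) (hF : ∀ i, F i ∈ homogeneousSubmodule σ K k) :
    finrank K ↥(⨆ i, Wspace k (k + 1) (L i) (F i)) +
        finrank K (homogeneousSubmodule (Fin (Fintype.card σ - Fintype.card ι)) K (k + 1)) ≤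
      finrank K (homogeneousSubmodule σ K (k + 1)) +
        Fintype.card ι * (Fintype.card σ - Fintype.card ι) := by
  obtain ⟨v, ψ, hv, hspan, hψL, hψv⟩ := exists_coordinates_killing hL hLi
  have hT := finrank_iSup_mulSub_add_finrank_le hL hv hψL hψv k
  set T := ⨆ i, mulSub (L i) (homogeneousSubmodule σ K k)
  set U := span K (Set.range fun p : ι × _ => F p.1 * v p.2)
  have hU : finrank K U ≤ Fintype.card ι * (Fintype.card σ - Fintype.card ι) :=
    (finrank_range_le_card _).trans (by simp)
  have := Submodule.finiteDimensional_of_le (iSup_mulSub_le_homogeneousSubmodule hL k)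
  have : FiniteDimensional K U := .span_of_finite K (Set.finite_range _)
  have hW := (finrank_mono (iSup_Wspace_succ_le hF hspan)).trans
    (finrank_add_le_finrank_add_finrank T U)
  omega

end Tangent

theorem stmt8_general {K : Type*} [Field K] (n k s : ℕ) (hsn : s ≤ n - 1)
    (hdef : s * (n - s + 1) < (n - s + k + 1).choose (k + 1)) :
    ∀ L : Fin s → MvPolynomial (Fin (n+1)) K,
      (∀ i, L i ∈ homogeneousSubmodule (Fin (n+1)) K 1) → LinearIndependent K L →
      ∀ F : Fin s → MvPolynomial (Fin (n+1)) K,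
        (∀ i, F i ∈ homogeneousSubmodule (Fin (n+1)) K k) →
      Module.finrank K ↥(⨆ i : Fin s, Wspace k (k + 1) (L i) (F i)) ≤
          (k + 1 + n).choose n - (n - s + k + 1).choose (k + 1) + s * (n - s + 1) ∧
        (⨆ i : Fin s, Wspace k (k + 1) (L i) (F i)) <
          homogeneousSubmodule (Fin (n+1)) K (k + 1) := by
  intro L hL hLi F hF
  have hW := finrank_iSup_Wspace_succ_add_finrank_le hL hLi hF
  have hWP := iSup_le fun i => Wspace_succ_le_homogeneousSubmodule (hL i) (hF i)
  have hP : finrank K (homogeneousSubmodule (Fin (n + 1)) K (k + 1)) = (k + 1 + n).choose n := by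
    rw [finrank_homogeneousSubmodule, Fintype.card_fin, ← Nat.choose_symm_add]
    congr 1
    omega
  rw [hP, finrank_homogeneousSubmodule] at hW
  simp only [Fintype.card_fin] at hW
  rw [show n + 1 - s + (k + 1) - 1 = n - s + k + 1 by omega,
    show n + 1 - s = n - s + 1 by omega] at hW
  exact ⟨by omega, lt_of_le_of_finrank_lt_finrank hWP (by omega)⟩

/-- for `d = k+1`, `2 ≤ s ≤ n-1`, when the expected dimension is `C(k+1+n,n)`
(all of `R_{k+1}`) and `s(n−s+1) < C(n−s+k+1,k+1)`, the span of the tangent spaces is a proper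
subspace of `R_{k+1}`, of dimension at most `C(k+1+n,n) − C(n−s+k+1,k+1) + s(n−s+1)`. -/
theorem stmt8 {K : Type*} [Field K] [CharZero K] (n k s : ℕ) (hn : 3 ≤ n) (hk : 1 ≤ k)
    (hs : 2 ≤ s) (hsn : s ≤ n - 1)
    (hexp : (k + 1 + n).choose n ≤ s * ((k + n).choose n + n))
    (hdef : s * (n - s + 1) < (n - s + k + 1).choose (k + 1)) :
    ∀ L : Fin s → MvPolynomial (Fin (n+1)) K,
      (∀ i, L i ∈ homogeneousSubmodule (Fin (n+1)) K 1) → LinearIndependent K L →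
      ∀ F : Fin s → MvPolynomial (Fin (n+1)) K,
        (∀ i, F i ∈ homogeneousSubmodule (Fin (n+1)) K k) →
      Module.finrank K ↥(⨆ i : Fin s, Wspace k (k + 1) (L i) (F i)) ≤
          (k + 1 + n).choose n - (n - s + k + 1).choose (k + 1) + s * (n - s + 1) ∧
        (⨆ i : Fin s, Wspace k (k + 1) (L i) (F i)) <
          homogeneousSubmodule (Fin (n+1)) K (k + 1) :=
  stmt8_general n k s hsn hdef
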